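/- arXiv:1602.08740 — 3 statements merged into one kernel-verified Lean document; each statement's English description precedes it below -/
import Mathlib

section
/- Suppose every two elements of a group Γ commute up to conjugation (for all α, β there is h with α·(hβh⁻¹) = (hβh⁻¹)·α). Then every commutator [α,β] in Γ equals a commutator of two elements of the derived subgroup Γ'; in particular Γ' = Γ'' and Γ' is perfect. -/
open scoped commutatorElement

/-!
If `α` commutes with `c := h β h⁻¹`, then right-multiplying `β` by `c⁻¹` does not change
`⁅α, β⁆`, and `β c⁻¹ = ⁅β, h⁆ ∈ Γ'`. So the second entry of any commutator can be moved
into `Γ'`; applying this once more to `⁅α, β⁆⁻¹ = ⁅β, α⁆` moves the first entry too.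
-/

theorem commutatorElement_mul_inv_right_of_commute {G : Type*} [Group G] {a c : G}
    (hac : Commute a c) (b : G) : ⁅a, b * c⁻¹⁆ = ⁅a, b⁆ := by
  have hac' : c⁻¹ * a⁻¹ = a⁻¹ * c⁻¹ := hac.inv_inv.eq.symm
  simp only [commutatorElement_def, mul_inv_rev, inv_inv]
  calc a * (b * c⁻¹) * a⁻¹ * (c * b⁻¹) = a * b * (c⁻¹ * a⁻¹) * c * b⁻¹ := by group
    _ = a * b * a⁻¹ * b⁻¹ := by rw [hac']; group

theorem commutatorElement_eq_commutatorElement_commutatorElement_of_commute_conj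
    {G : Type*} [Group G] {a b h : G} (hcomm : Commute a (h * b * h⁻¹)) :
    ⁅a, b⁆ = ⁅a, ⁅b, h⁆⁆ := by
  rw [← commutatorElement_mul_inv_right_of_commute hcomm b]
  simp only [commutatorElement_def, mul_inv_rev, inv_inv, mul_assoc]

theorem commutatorElement_mem_commutator {G : Type*} [Group G] (a b : G) :
    ⁅a, b⁆ ∈ commutator G :=
  Subgroup.commutator_mem_commutator (Subgroup.mem_top a) (Subgroup.mem_top b)

/-- If every two elements of `Γ` commute up to conjugation, then every commutator
of `Γ` is a commutator of two elements of the derived subgroup `Γ'`; in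
particular `Γ'' = Γ'`, i.e. `Γ'` is perfect. -/
theorem commutator_of_derived_of_commute_up_to_conjugation {Γ : Type*} [Group Γ]
    (hc : ∀ α β : Γ, ∃ h : Γ, Commute α (h * β * h⁻¹)) :
    (∀ α β : Γ, ∃ a ∈ commutator Γ, ∃ b ∈ commutator Γ, ⁅α, β⁆ = ⁅a, b⁆) ∧
    ⁅commutator Γ, commutator Γ⁆ = commutator Γ := by
  have main : ∀ α β : Γ, ∃ a ∈ commutator Γ, ∃ b ∈ commutator Γ, ⁅α, β⁆ = ⁅a, b⁆ := by
    intro α β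
    obtain ⟨h, hh⟩ := hc α β
    set e := ⁅β, h⁆
    obtain ⟨k, hk⟩ := hc e α
    refine ⟨⁅α, k⁆, commutatorElement_mem_commutator α k, e,
      commutatorElement_mem_commutator β h, ?_⟩
    rw [commutatorElement_eq_commutatorElement_commutatorElement_of_commute_conj hh,
      ← commutatorElement_inv e α,
      commutatorElement_eq_commutatorElement_commutatorElement_of_commute_conj hk,
      commutatorElement_inv]
  refine ⟨main, le_antisymm (Subgroup.commutator_le_left _ _) ?_⟩
  rw [commutator_def Γ, Subgroup.commutator_le]
  intro α _ β _
  obtain ⟨a, ha, b, hb, hab⟩ := main α β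
  exact hab ▸ Subgroup.commutator_mem_commutator ha hb
end

section
/- Let Γ be a group and g ∈ Γ such that for every finitely generated subgroup H ≤ Γ and every k ∈ ℕ, some conjugate of g k-displaces H. Then every element of the derived subgroup Γ' is a product of three g-commutators; equivalently Γ' ⊆ (ᴳg · ᴳ(g⁻¹))³ where ᴳg denotes the conjugacy class of g. -/
/-!
Write `f ∈ Γ'` as `∏ ⁅aᵢ, bᵢ⁆` (`i = 1, …, n`) with all `aᵢ, bᵢ` in a finitely generated
subgroup `H`, and let a conjugate `c` of `g` `n`-displace `H`. Then `H` commutes with every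
`cⁱ H c⁻ⁱ`, `1 ≤ i ≤ n`, so `A = ∏ cⁱ aᵢ c⁻ⁱ` and `B = ∏ cⁱ bᵢ c⁻ⁱ` satisfy
`⁅A, B⁆ = ∏ cⁱ ⁅aᵢ, bᵢ⁆ c⁻ⁱ`, and this twisted product differs from `f` by a single
`g`-commutator `⁅c⁻¹, U⁆` (in additive terms, with
`tᵢ = ⁅aᵢ, bᵢ⁆`: `∑ tᵢ xⁱ - ∑ tᵢ = (x - 1) ∑ tᵢ (1 + ⋯ + xⁱ⁻¹)`).
Finally, if a conjugate `d` of `g` `1`-displaces `⟨A, B⟩`, then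
`⁅A, B⁆ = A ⁅B, d⁆ A⁻¹ ⁅d, B⁆` is a product of two `g`-commutators.
-/

open scoped commutatorElement

section

variable {Γ : Type*} [Group Γ]

def Displaces (c : Γ) (H : Subgroup Γ) (k : ℕ) : Prop :=
  ∀ f h : Γ, f ∈ H → h ∈ H → ∀ i : ℕ, 1 ≤ i → i ≤ k → Commute f (c ^ i * h * (c ^ i)⁻¹)

/-- `conjPowProd c [x₁, …, xₙ] = ∏ᵢ cⁱ xᵢ c⁻ⁱ`, in the nested form `c (x₁ c (x₂ ⋯) c⁻¹) c⁻¹`. -/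
def conjPowProd (c : Γ) : List Γ → Γ
  | [] => 1
  | x :: l => c * (x * conjPowProd c l) * c⁻¹

def conjPowClosure (c : Γ) (H : Subgroup Γ) (m : ℕ) : Subgroup Γ :=
  Subgroup.closure {x | ∃ i, 1 ≤ i ∧ i ≤ m ∧ ∃ h ∈ H, x = c ^ i * h * (c ^ i)⁻¹}

variable {c : Γ} {H : Subgroup Γ}

theorem Displaces.mono {k m : ℕ} (hc : Displaces c H k) (hm : m ≤ k) : Displaces c H m :=
  fun f h hf hh i hi him => hc f h hf hh i hi (him.trans hm)

theorem Displaces.conjPowClosure_le_centralizer {k : ℕ} (hc : Displaces c H k) :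
    conjPowClosure c H k ≤ Subgroup.centralizer H := by
  refine (Subgroup.closure_le _).mpr ?_
  rintro _ ⟨i, hi, hik, h, hh, rfl⟩
  exact Subgroup.mem_centralizer_iff.mpr fun f hf => (hc f h hf hh i hi hik).eq

theorem Displaces.commute_of_mem_conjPowClosure {k : ℕ} (hc : Displaces c H k) {f x : Γ}
    (hf : f ∈ H) (hx : x ∈ conjPowClosure c H k) : Commute f x :=
  Subgroup.mem_centralizer_iff.mp (hc.conjPowClosure_le_centralizer hx) f hf

theorem conj_mem_conjPowClosure_succ {m : ℕ} {x : Γ} (hx : x ∈ conjPowClosure c H m) :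
    c * x * c⁻¹ ∈ conjPowClosure c H (m + 1) := by
  have hle : conjPowClosure c H m ≤
      (conjPowClosure c H (m + 1)).comap (MulAut.conj c).toMonoidHom := by
    refine (Subgroup.closure_le _).mpr ?_
    rintro _ ⟨i, hi, him, h, hh, rfl⟩
    refine Subgroup.subset_closure ⟨i + 1, by omega, by omega, h, hh, ?_⟩
    simp only [MulEquiv.coe_toMonoidHom, MulAut.conj_apply]
    group
  exact hle hx

theorem conj_mem_conjPowClosure_succ_of_mem {m : ℕ} {h : Γ} (hh : h ∈ H) :
    c * h * c⁻¹ ∈ conjPowClosure c H (m + 1) :=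
  Subgroup.subset_closure ⟨1, le_rfl, by omega, h, hh, by rw [pow_one]⟩

theorem conjPowProd_mem {l : List Γ} (hl : ∀ x ∈ l, x ∈ H) :
    conjPowProd c l ∈ conjPowClosure c H l.length := by
  induction l with
  | nil => exact one_mem _
  | cons x l ih =>
    rw [List.forall_mem_cons] at hl
    have hsplit : conjPowProd c (x :: l) = (c * x * c⁻¹) * (c * conjPowProd c l * c⁻¹) := by
      simp only [conjPowProd]; group
    rw [hsplit]
    exact mul_mem (conj_mem_conjPowClosure_succ_of_mem hl.1)
      (conj_mem_conjPowClosure_succ (ih hl.2))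

theorem commutatorElement_mul_mul_of_commute {a b A B : Γ} (haA : Commute a A)
    (haB : Commute a B) (hbA : Commute b A) (hbB : Commute b B) :
    ⁅a * A, b * B⁆ = ⁅a, b⁆ * ⁅A, B⁆ := by
  have haAB : Commute a ⁅A, B⁆ :=
    ((haA.mul_right haB).mul_right haA.inv_right).mul_right haB.inv_right
  have hbAB : Commute b ⁅A, B⁆ :=
    ((hbA.mul_right hbB).mul_right hbA.inv_right).mul_right hbB.inv_right
  calc ⁅a * A, b * B⁆ = a * (A * b) * B * A⁻¹ * a⁻¹ * B⁻¹ * b⁻¹ := by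
        rw [commutatorElement_def]; group
    _ = a * b * (A * B * A⁻¹ * (a⁻¹ * B⁻¹)) * b⁻¹ := by rw [← hbA.eq]; group
    _ = a * b * (⁅A, B⁆ * a⁻¹) * b⁻¹ := by rw [haB.inv_inv.eq, commutatorElement_def]; group
    _ = a * b * a⁻¹ * (⁅A, B⁆ * b⁻¹) := by rw [← haAB.inv_left.eq]; group
    _ = ⁅a, b⁆ * ⁅A, B⁆ := by rw [← hbAB.inv_left.eq, commutatorElement_def]; group

theorem Displaces.commutatorElement_conjPowProd {l : List (Γ × Γ)}
    (hc : Displaces c H l.length) (hl : ∀ p ∈ l, p.1 ∈ H ∧ p.2 ∈ H) :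
    ⁅conjPowProd c (l.map Prod.fst), conjPowProd c (l.map Prod.snd)⁆ =
      conjPowProd c (l.map fun p => ⁅p.1, p.2⁆) := by
  induction l with
  | nil => simp [conjPowProd]
  | cons p l ih =>
    rw [List.forall_mem_cons] at hl
    have hc' : Displaces c H l.length := hc.mono (Nat.le_succ _)
    have hA := conjPowProd_mem (c := c) (List.forall_mem_map.mpr fun q hq => (hl.2 q hq).1)
    have hB := conjPowProd_mem (c := c) (List.forall_mem_map.mpr fun q hq => (hl.2 q hq).2)
    rw [List.length_map] at hA hB
    simp only [List.map_cons, conjPowProd, ← ih hc' hl.2]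
    rw [← conjugate_commutatorElement, commutatorElement_mul_mul_of_commute
      (hc'.commute_of_mem_conjPowClosure hl.1.1 hA) (hc'.commute_of_mem_conjPowClosure hl.1.1 hB)
      (hc'.commute_of_mem_conjPowClosure hl.1.2 hA) (hc'.commute_of_mem_conjPowClosure hl.1.2 hB)]

theorem Displaces.exists_prod_eq_commutatorElement_mul_conjPowProd {l : List Γ}
    (hc : Displaces c H l.length) (hl : ∀ x ∈ l, x ∈ H) :
    ∃ U, l.prod = ⁅c⁻¹, U⁆ * conjPowProd c l := by
  induction l with
  | nil => exact ⟨1, by simp [conjPowProd]⟩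
  | cons x l ih =>
    rw [List.forall_mem_cons] at hl
    have hc' : Displaces c H l.length := hc.mono (Nat.le_succ _)
    obtain ⟨U, hU⟩ := ih hc' hl.2
    have hPS : ⁅l.prod, (conjPowProd c l)⁻¹⁆ = 1 :=
      commutatorElement_eq_one_iff_commute.mpr (hc'.commute_of_mem_conjPowClosure
        (H.list_prod_mem hl.2) (conjPowProd_mem hl.2)).inv_right
    have hU' : U * c * U⁻¹ = c * l.prod * (conjPowProd c l)⁻¹ := by
      rw [hU, commutatorElement_def]; group
    -- the witness is `∏ⱼ cʲ (xⱼ ⋯ xₙ) c⁻ʲ`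
    refine ⟨c * (x * l.prod * U) * c⁻¹, ?_⟩
    calc (x :: l).prod = x * l.prod * c * ⁅l.prod, (conjPowProd c l)⁻¹⁆ * c⁻¹ := by
          rw [hPS, List.prod_cons]; group
      _ = x * l.prod * (U * c * U⁻¹) * l.prod⁻¹ * conjPowProd c l * c⁻¹ := by rw [hU']; group
      _ = ⁅c⁻¹, c * (x * l.prod * U) * c⁻¹⁆ * conjPowProd c (x :: l) := by
          simp only [commutatorElement_def, conjPowProd]; group

theorem commutatorElement_eq_of_commute_conj {A B d : Γ} (h : Commute A (d * B * d⁻¹)) :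
    ⁅A, B⁆ = A * ⁅B, d⁆ * A⁻¹ * ⁅d, B⁆ := by
  calc ⁅A, B⁆ = A * B * d * B⁻¹ * d⁻¹ * ((d * B * d⁻¹) * A⁻¹) * B⁻¹ := by
        rw [commutatorElement_def]; group
    _ = _ := by rw [← h.inv_left.eq]; simp only [commutatorElement_def]; group

theorem exists_fg_list_commutatorElement_prod {f : Γ} (hf : f ∈ commutator Γ) :
    ∃ H : Subgroup Γ, H.FG ∧ ∃ l : List (Γ × Γ), (∀ p ∈ l, p.1 ∈ H ∧ p.2 ∈ H) ∧
      (l.map fun p => ⁅p.1, p.2⁆).prod = f := by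
  obtain ⟨l, rfl⟩ : ∃ l : List (Γ × Γ), (l.map fun p => ⁅p.1, p.2⁆).prod = f := by
    rw [commutator_eq_closure] at hf
    induction hf using Subgroup.closure_induction with
    | mem _ h => obtain ⟨a, b, rfl⟩ := h; exact ⟨[(a, b)], by simp⟩
    | one => exact ⟨[], rfl⟩
    | mul _ _ _ _ h₁ h₂ =>
      obtain ⟨l₁, rfl⟩ := h₁; obtain ⟨l₂, rfl⟩ := h₂; exact ⟨l₁ ++ l₂, by simp⟩
    | inv _ _ h =>
      obtain ⟨l, rfl⟩ := h
      exact ⟨(l.map Prod.swap).reverse,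
        by simp [List.prod_inv_reverse, Function.comp_def, commutatorElement_inv]⟩
  refine ⟨Subgroup.closure {x | x ∈ l.map Prod.fst ++ l.map Prod.snd},
    (Subgroup.fg_iff _).mpr ⟨_, rfl, List.finite_toSet _⟩, l, fun p hp => ⟨?_, ?_⟩, rfl⟩
  · exact Subgroup.subset_closure (List.mem_append_left _ (List.mem_map_of_mem hp))
  · exact Subgroup.subset_closure (List.mem_append_right _ (List.mem_map_of_mem hp))

theorem Displaces.exists_prod_commutatorElement_eq {l : List (Γ × Γ)}
    (hc : Displaces c H l.length) (hl : ∀ p ∈ l, p.1 ∈ H ∧ p.2 ∈ H) :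
    ∃ U A B : Γ, (l.map fun p => ⁅p.1, p.2⁆).prod = ⁅c⁻¹, U⁆ * ⁅A, B⁆ := by
  have hcomm : ∀ x ∈ l.map fun p => ⁅p.1, p.2⁆, x ∈ H := List.forall_mem_map.mpr fun p hp => by
    rw [commutatorElement_def]
    exact mul_mem (mul_mem (mul_mem (hl p hp).1 (hl p hp).2) (inv_mem (hl p hp).1))
      (inv_mem (hl p hp).2)
  obtain ⟨U, hU⟩ := Displaces.exists_prod_eq_commutatorElement_mul_conjPowProd
    (by rwa [List.length_map]) hcomm
  exact ⟨U, _, _, hU.trans (by rw [hc.commutatorElement_conjPowProd hl])⟩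

end

/-- If for every finitely generated subgroup `H ≤ Γ` and every `k` some conjugate
of `g` `k`-displaces `H`, then every element of the derived subgroup `Γ'` is a
product of three `g`-commutators, i.e. of three conjugates of `g` and three
conjugates of `g⁻¹` (alternating). -/
theorem derived_in_three_g_commutators {Γ : Type*} [Group Γ] (g : Γ)
    (hdisp : ∀ H : Subgroup Γ, H.FG → ∀ k : ℕ, ∃ γ : Γ,
      ∀ f g' : Γ, f ∈ H → g' ∈ H → ∀ i : ℕ, 1 ≤ i → i ≤ k →
        Commute f ((γ * g * γ⁻¹) ^ i * g' * ((γ * g * γ⁻¹) ^ i)⁻¹)) :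
    ∀ f ∈ commutator Γ, ∃ a₁ b₁ a₂ b₂ a₃ b₃ : Γ,
      f = (a₁ * g * a₁⁻¹) * (b₁ * g⁻¹ * b₁⁻¹) * (a₂ * g * a₂⁻¹) *
          (b₂ * g⁻¹ * b₂⁻¹) * (a₃ * g * a₃⁻¹) * (b₃ * g⁻¹ * b₃⁻¹) := by
  intro f hf
  obtain ⟨H, hH, l, hl, rfl⟩ := exists_fg_list_commutatorElement_prod hf
  obtain ⟨γ, hγ⟩ := hdisp H hH l.length
  obtain ⟨U, A, B, hUAB⟩ := Displaces.exists_prod_commutatorElement_eq (c := γ * g * γ⁻¹) hγ hl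
  obtain ⟨δ, hδ⟩ := hdisp (Subgroup.closure {A, B})
    ((Subgroup.fg_iff _).mpr ⟨_, rfl, Set.toFinite _⟩) 1
  have hAB := commutatorElement_eq_of_commute_conj (d := δ * g * δ⁻¹) <| by
    simpa using hδ A B (Subgroup.subset_closure (by simp)) (Subgroup.subset_closure (by simp))
      1 le_rfl le_rfl
  refine ⟨(γ * g * γ⁻¹)⁻¹ * U * γ, γ, A * B * δ, A * δ, δ, B * δ, ?_⟩
  rw [hUAB, hAB, commutatorElement_def]
  group
end

section
/- Let Γ be a topological full group acting faithfully and extremely proximally on a Cantor set C, and let U ⊊ V ⊆ C be clopen with U proper in V. Then there exists h in the commutator subgroup of Γ_V such that the sets hᵏ(U), k ∈ ℤ, are pairwise disjoint. -/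
variable {C : Type*}

/-- The group of self-homeomorphisms of a space, with `g * h = h.trans g`
(i.e. `(g * h) x = g (h x)`). -/
instance homeoGroup [TopologicalSpace C] : Group (C ≃ₜ C) where
  mul g h := h.trans g
  one := Homeomorph.refl C
  inv := Homeomorph.symm
  mul_assoc _ _ _ := rfl
  one_mul _ := rfl
  mul_one _ := rfl
  inv_mul_cancel g := by ext x; exact g.symm_apply_apply x

/-- `Γ` is a topological full group: any homeomorphism which locally agrees with
elements of `Γ` belongs to `Γ`. -/
def IsTopologicalFullGroup [TopologicalSpace C] (Γ : Subgroup (C ≃ₜ C)) : Prop :=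
  ∀ g : C ≃ₜ C,
    (∀ x : C, ∃ U : Set C, IsOpen U ∧ x ∈ U ∧ ∃ γ ∈ Γ, ∀ y ∈ U, g y = γ y) →
    g ∈ Γ

/-- A set `A` of homeomorphisms acts extremely proximally: any nonempty proper
clopen set can be mapped strictly inside any other nonempty proper clopen set. -/
def ExtremelyProximal [TopologicalSpace C] (A : Set (C ≃ₜ C)) : Prop :=
  ∀ U V : Set C, IsClopen U → IsClopen V → U.Nonempty → V.Nonempty →
    U ≠ Set.univ → V ≠ Set.univ → ∃ g ∈ A, g '' U ⊂ V

/-- The subgroup of elements of `Γ` supported on a set `U`. -/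
def suppSubgroup [TopologicalSpace C] (Γ : Subgroup (C ≃ₜ C)) (U : Set C) :
    Subgroup (C ≃ₜ C) where
  carrier := {g | g ∈ Γ ∧ ∀ x ∉ U, g x = x}
  one_mem' := ⟨Γ.one_mem, fun _ _ => rfl⟩
  mul_mem' := by
    rintro a b ⟨ha, ha'⟩ ⟨hb, hb'⟩
    exact ⟨Γ.mul_mem ha hb, fun x hx => by
      show a (b x) = x
      rw [hb' x hx, ha' x hx]⟩
  inv_mem' := by
    rintro a ⟨ha, ha'⟩
    refine ⟨Γ.inv_mem ha, fun x hx => ?_⟩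
    conv_lhs => rw [← ha' x hx]
    exact a.symm_apply_apply x

/-!
Pick `g ∈ Γ` with `g U ⊊ V \ U` and put `E = U ∪ g U`. Composing two swaps (involutions of the
full group exchanging a clopen set `A` with a disjoint translate `γ A`) gives `a ∈ Γ_V` with
`a E ⊆ g U ⊆ E \ U`, supported in a clopen `S ⊊ V`. A third swap `b` moves `S` off itself inside
`V`, so the commutator `⁅a, b⁆ ∈ [Γ_V, Γ_V]` still agrees with `a` on `S`. Hence `h = ⁅a, b⁆`
satisfies `hⁿ U ⊆ E \ U` for all `n ≥ 1`, which makes the translates `hᵏ U` pairwise disjoint.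
-/

open Set Function
open scoped commutatorElement

section Swap

variable {α : Type*}

open Classical in
noncomputable def swapFun (e : α ≃ α) (A : Set α) : α → α :=
  A.piecewise e ((e '' A).piecewise e.symm id)

variable {e : α ≃ α} {A : Set α} {x : α}

lemma swapFun_of_mem (hx : x ∈ A) : swapFun e A x = e x := by
  classical
  exact piecewise_eq_of_mem _ _ _ hx

lemma swapFun_of_mem_image (hd : Disjoint A (e '' A)) (hx : x ∈ e '' A) :
    swapFun e A x = e.symm x := by
  classical
  rw [swapFun, piecewise_eq_of_notMem _ _ _ (disjoint_right.1 hd hx), piecewise_eq_of_mem _ _ _ hx]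

lemma swapFun_of_notMem (hxA : x ∉ A) (hx : x ∉ e '' A) : swapFun e A x = x := by
  classical
  rw [swapFun, piecewise_eq_of_notMem _ _ _ hxA, piecewise_eq_of_notMem _ _ _ hx, id]

lemma swapFun_involutive (hd : Disjoint A (e '' A)) : Involutive (swapFun e A) := by
  intro x
  by_cases hxA : x ∈ A
  · rw [swapFun_of_mem hxA, swapFun_of_mem_image hd (mem_image_of_mem e hxA), e.symm_apply_apply]
  by_cases hx : x ∈ e '' A
  · have hA : e.symm x ∈ A := by
      obtain ⟨y, hy, rfl⟩ := hx
      simpa using hy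
    rw [swapFun_of_mem_image hd hx, swapFun_of_mem hA, e.apply_symm_apply]
  · rw [swapFun_of_notMem hxA hx, swapFun_of_notMem hxA hx]

end Swap

section

variable [TopologicalSpace C]

lemma IsClopen.image_homeomorph {A : Set C} (hA : IsClopen A) (g : C ≃ₜ C) :
    IsClopen (g '' A) :=
  ⟨g.isClosed_image.2 hA.1, g.isOpen_image.2 hA.2⟩

lemma mapsTo_pow_succ_diff {h : C ≃ₜ C} {E U : Set C} (hE : MapsTo h E (E \ U)) :
    ∀ n : ℕ, MapsTo ⇑(h ^ (n + 1)) E (E \ U)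
  | 0 => by simpa using hE
  | n + 1 => by
    rw [pow_succ]
    exact (mapsTo_pow_succ_diff hE n).comp (hE.mono_right sdiff_subset)

lemma pairwise_disjoint_image_zpow {h : C ≃ₜ C} {E U : Set C} (hUE : U ⊆ E)
    (hE : MapsTo h E (E \ U)) : Pairwise (Disjoint on fun k : ℤ => (h ^ k) '' U) := by
  refine (pairwise_disjoint_on _).2 fun k l hkl => ?_
  obtain ⟨n, rfl⟩ : ∃ n : ℕ, l = k + (n + 1 : ℕ) := ⟨(l - k - 1).toNat, by omega⟩
  rw [zpow_add, zpow_natCast]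
  change Disjoint ((h ^ k) '' U) ((h ^ k) ∘ (h ^ (n + 1)) '' U)
  rw [image_comp, disjoint_image_iff (h ^ k).injective]
  exact disjoint_sdiff_right.mono_right ((mapsTo_pow_succ_diff hE n).mono_left hUE).image_subset

lemma commutatorElement_eqOn {a b : C ≃ₜ C} {S : Set C} (ha : ∀ x ∉ S, a x = x)
    (hb : MapsTo ⇑b⁻¹ S Sᶜ) : EqOn ⇑⁅a, b⁆ a S := by
  intro x hx
  have hfix : a.symm (b.symm x) = b.symm x := a.symm_apply_eq.2 (ha _ (hb hx)).symm
  simp [commutatorElement_def, hfix]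

lemma suppSubgroup_mono {Γ : Subgroup (C ≃ₜ C)} {S T : Set C} (hST : S ⊆ T) :
    suppSubgroup Γ S ≤ suppSubgroup Γ T :=
  fun _ ⟨hg, hfix⟩ => ⟨hg, fun x hx => hfix x fun hxS => hx (hST hxS)⟩

lemma continuous_swapFun (γ : C ≃ₜ C) {A : Set C} (hA : IsClopen A) :
    Continuous (swapFun γ.toEquiv A) := by
  classical
  have hγA : IsClopen (γ '' A) := hA.image_homeomorph γ
  refine γ.continuous.piecewise (by simp [hA.frontier_eq]) ?_
  exact γ.symm.continuous.piecewise (by simp [hγA.frontier_eq]) continuous_id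

noncomputable def clopenSwap (γ : C ≃ₜ C) {A : Set C} (hA : IsClopen A)
    (hd : Disjoint A (γ '' A)) : C ≃ₜ C where
  toEquiv := (swapFun_involutive (e := γ.toEquiv) hd).toPerm _
  continuous_toFun := continuous_swapFun γ hA
  continuous_invFun := continuous_swapFun γ hA

section clopenSwap

variable {γ : C ≃ₜ C} {A : Set C} (hA : IsClopen A) (hd : Disjoint A (γ '' A))

lemma clopenSwap_apply_of_mem {x : C} (hx : x ∈ A) : clopenSwap γ hA hd x = γ x :=
  swapFun_of_mem hx

lemma clopenSwap_inv : (clopenSwap γ hA hd)⁻¹ = clopenSwap γ hA hd := rfl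

lemma clopenSwap_mem_suppSubgroup {Γ : Subgroup (C ≃ₜ C)} (hfull : IsTopologicalFullGroup Γ)
    (hγ : γ ∈ Γ) : clopenSwap γ hA hd ∈ suppSubgroup Γ (A ∪ γ '' A) := by
  have hγA : IsClopen (γ '' A) := hA.image_homeomorph γ
  have hfix : ∀ x ∉ A ∪ γ '' A, clopenSwap γ hA hd x = x := fun x hx =>
    swapFun_of_notMem (fun h => hx (.inl h)) (fun h => hx (.inr h))
  refine ⟨hfull _ fun x => ?_, hfix⟩
  by_cases hxA : x ∈ A
  · exact ⟨A, hA.isOpen, hxA, γ, hγ, fun y hy => swapFun_of_mem hy⟩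
  by_cases hx : x ∈ γ '' A
  · exact ⟨γ '' A, hγA.isOpen, hx, γ⁻¹, Γ.inv_mem hγ, fun y hy => swapFun_of_mem_image hd hy⟩
  · exact ⟨(A ∪ γ '' A)ᶜ, (hA.union hγA).isClosed.isOpen_compl, by simp [hxA, hx], 1,
      Γ.one_mem, hfix⟩

end clopenSwap

variable {Γ : Subgroup (C ≃ₜ C)}

lemma ExtremelyProximal.exists_image_ssubset_diff (hprox : ExtremelyProximal (Γ : Set (C ≃ₜ C)))
    {A V : Set C} (hA : IsClopen A) (hV : IsClopen V) (hAV : A ⊂ V) (hA0 : A.Nonempty) :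
    ∃ g ∈ Γ, g '' A ⊂ V \ A := by
  obtain ⟨p, hpV, hpA⟩ := exists_of_ssubset hAV
  have hVA0 : (V \ A).Nonempty := ⟨p, hpV, hpA⟩
  exact hprox A (V \ A) hA (hV.diff hA) hA0 hVA0
    (disjoint_sdiff_right.symm.ne_top_of_ne_bot hVA0.ne_empty)
    (disjoint_sdiff_right.ne_top_of_ne_bot hA0.ne_empty)

variable (hfull : IsTopologicalFullGroup Γ) (hprox : ExtremelyProximal (Γ : Set (C ≃ₜ C)))
  {V : Set C} (hV : IsClopen V)
include hfull hprox hV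

lemma exists_mem_suppSubgroup_mapsTo {E M : Set C} (hE : IsClopen E) (hM : IsClopen M)
    (hEV : E ⊂ V) (hME : M ⊆ E) (hM0 : M.Nonempty) :
    ∃ S, IsClopen S ∧ E ⊆ S ∧ S ⊂ V ∧ ∃ a ∈ suppSubgroup Γ S, MapsTo a E M := by
  have hE0 : E.Nonempty := hM0.mono hME
  obtain ⟨δ, hδ, hδE⟩ := hprox.exists_image_ssubset_diff hE hV hEV hE0
  have hE' : IsClopen (δ '' E) := hE.image_homeomorph δ
  have hdE : Disjoint E (δ '' E) := disjoint_sdiff_right.mono_right hδE.subset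
  have hE'M : Disjoint (δ '' E) M := (hdE.mono_left hME).symm
  obtain ⟨ε, hε, hεE'⟩ := hprox (δ '' E) M hE' hM (hE0.image δ) hM0
    (hE'M.symm.ne_top_of_ne_bot hM0.ne_empty) (hE'M.ne_top_of_ne_bot (hE0.image δ).ne_empty)
  have hdE' : Disjoint (δ '' E) (ε '' (δ '' E)) := hE'M.mono_right hεE'.subset
  obtain ⟨r, hrV, hrE⟩ := exists_of_ssubset hδE
  have hSV : E ∪ δ '' E ⊆ V := union_subset hEV.subset (hδE.subset.trans sdiff_subset)
  refine ⟨E ∪ δ '' E, hE.union hE', subset_union_left,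
    (ssubset_iff_of_subset hSV).2 ⟨r, hrV.1, by simp [hrV.2, hrE]⟩,
    clopenSwap ε hE' hdE' * clopenSwap δ hE hdE, mul_mem ?_ ?_, fun x hx => ?_⟩
  · refine suppSubgroup_mono ?_ (clopenSwap_mem_suppSubgroup hE' hdE' hfull hε)
    exact union_subset subset_union_right (hεE'.subset.trans (hME.trans subset_union_left))
  · exact clopenSwap_mem_suppSubgroup hE hdE hfull hδ
  · rw [Homeomorph.mul_apply, clopenSwap_apply_of_mem hE hdE hx,
      clopenSwap_apply_of_mem hE' hdE' (mem_image_of_mem δ hx)]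
    exact hεE'.subset (mem_image_of_mem ε (mem_image_of_mem δ hx))

lemma exists_mem_suppSubgroup_mapsTo_diff {U : Set C} (hU : IsClopen U) (hUV : U ⊂ V)
    (hU0 : U.Nonempty) :
    ∃ E S, U ⊆ E ∧ IsClopen S ∧ E ⊆ S ∧ S ⊂ V ∧ ∃ a ∈ suppSubgroup Γ S, MapsTo a E (E \ U) := by
  obtain ⟨g, hg, hgU⟩ := hprox.exists_image_ssubset_diff hU hV hUV hU0
  have hEV : U ∪ g '' U ⊂ V := by
    obtain ⟨q, hqV, hqg⟩ := exists_of_ssubset hgU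
    refine (ssubset_iff_of_subset (union_subset hUV.subset ?_)).2 ⟨q, hqV.1, by simp [hqV.2, hqg]⟩
    exact hgU.subset.trans sdiff_subset
  obtain ⟨S, hS, hES, hSV, a, ha, haE⟩ := exists_mem_suppSubgroup_mapsTo hfull hprox hV
    (hU.union (hU.image_homeomorph g)) (hU.image_homeomorph g) hEV subset_union_right
    (hU0.image g)
  refine ⟨U ∪ g '' U, S, subset_union_left, hS, hES, hSV, a, ha, haE.mono_right ?_⟩
  exact subset_sdiff.2 ⟨subset_union_right, (disjoint_sdiff_right.mono_right hgU.subset).symm⟩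

lemma exists_mem_commutator_eqOn {S : Set C} (hS : IsClopen S) (hSV : S ⊂ V) (hS0 : S.Nonempty)
    {a : C ≃ₜ C} (ha : a ∈ suppSubgroup Γ S) :
    ∃ h ∈ ⁅suppSubgroup Γ V, suppSubgroup Γ V⁆, EqOn h a S := by
  obtain ⟨ζ, hζ, hζS⟩ := hprox.exists_image_ssubset_diff hS hV hSV hS0
  have hd : Disjoint S (ζ '' S) := disjoint_sdiff_right.mono_right hζS.subset
  have hb : clopenSwap ζ hS hd ∈ suppSubgroup Γ V :=
    suppSubgroup_mono (union_subset hSV.subset (hζS.subset.trans sdiff_subset))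
      (clopenSwap_mem_suppSubgroup hS hd hfull hζ)
  refine ⟨_, Subgroup.commutator_mem_commutator (suppSubgroup_mono hSV.subset ha) hb,
    commutatorElement_eqOn ha.2 fun x hx => ?_⟩
  rw [clopenSwap_inv, clopenSwap_apply_of_mem hS hd hx]
  exact (hζS.subset (mem_image_of_mem ζ hx)).2

end

theorem exists_element_with_pairwise_disjoint_powers_general [TopologicalSpace C]
    (Γ : Subgroup (C ≃ₜ C))
    (hfull : IsTopologicalFullGroup Γ) (hprox : ExtremelyProximal (Γ : Set (C ≃ₜ C)))
    (U V : Set C) (hU : IsClopen U) (hV : IsClopen V) (hUV : U ⊂ V) :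
    ∃ h ∈ ⁅suppSubgroup Γ V, suppSubgroup Γ V⁆, ∀ k l : ℤ, k ≠ l →
      Disjoint ((h ^ k) '' U) ((h ^ l) '' U) := by
  rcases U.eq_empty_or_nonempty with rfl | hU0
  · exact ⟨1, one_mem _, fun k l _ => by simp⟩
  obtain ⟨E, S, hUE, hS, hES, hSV, a, ha, haE⟩ :=
    exists_mem_suppSubgroup_mapsTo_diff hfull hprox hV hU hUV hU0
  obtain ⟨h, hh, hha⟩ :=
    exists_mem_commutator_eqOn hfull hprox hV hS hSV ((hU0.mono hUE).mono hES) ha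
  have hhE : MapsTo h E (E \ U) := haE.congr (hha.mono hES).symm
  exact ⟨h, hh, fun k l hkl => pairwise_disjoint_image_zpow hUE hhE hkl⟩

/-- If `Γ` is a topological full group acting extremely proximally on a Cantor
set `C` and `U ⊊ V` are clopen, then there is `h` in the commutator subgroup of
`Γ_V` whose integer powers move `U` to pairwise disjoint sets. -/
theorem exists_element_with_pairwise_disjoint_powers [TopologicalSpace C]
    (hC : Nonempty (C ≃ₜ (ℕ → Bool))) (Γ : Subgroup (C ≃ₜ C))
    (hfull : IsTopologicalFullGroup Γ) (hprox : ExtremelyProximal (Γ : Set (C ≃ₜ C)))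
    (U V : Set C) (hU : IsClopen U) (hV : IsClopen V) (hUV : U ⊂ V) :
    ∃ h ∈ ⁅suppSubgroup Γ V, suppSubgroup Γ V⁆, ∀ k l : ℤ, k ≠ l →
      Disjoint ((h ^ k) '' U) ((h ^ l) '' U) :=
  exists_element_with_pairwise_disjoint_powers_general Γ hfull hprox U V hU hV hUV
end
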